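/- Let A ∈ ℝ^{n×N}, τ, λ > 0, Y ∈ ℝ^{n×m}, and L ≥ 2. Then for any orthogonal matrices Φ₁, Φ₂ ∈ O(N), the outputs of the L-layer unfolded ISTA networks satisfy ‖f_{Φ₁}^L(Y) − f_{Φ₂}^L(Y)‖_F ≤ K_L · ‖AΦ₁ − AΦ₂‖_{2→2}, where K_L = τ‖Y‖_F·‖I − τAᵀA‖_{2→2}^{L−1} + τ‖Y‖_F · Σ_{l=2}^{L} ‖I − τAᵀA‖_{2→2}^{L−l} · (1 + 2τ‖A‖²_{2→2} · Σ_{k=0}^{l−2} ‖I − τAᵀA‖_{2→2}^k). -/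

import Mathlib

open MeasureTheory Matrix
open scoped ENNReal

noncomputable def soft (mu x : ℝ) : ℝ := Real.sign x * max 0 (|x| - mu)

noncomputable def softMat {a b : ℕ} (mu : ℝ) (M : Matrix (Fin a) (Fin b) ℝ) :
    Matrix (Fin a) (Fin b) ℝ := Matrix.of fun i j => soft mu (M i j)

noncomputable def specNorm {a b : ℕ} (A : Matrix (Fin a) (Fin b) ℝ) : ℝ :=
  ‖LinearMap.toContinuousLinearMap (Matrix.toEuclideanLin A)‖

noncomputable def frobNorm {a b : ℕ} (A : Matrix (Fin a) (Fin b) ℝ) : ℝ :=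
  Real.sqrt (∑ i, ∑ j, (A i j) ^ 2)

noncomputable def l2 {N : ℕ} (x : Fin N → ℝ) : ℝ := Real.sqrt (∑ i, x i ^ 2)

noncomputable def sigma {N : ℕ} (B : ℝ) (x : Fin N → ℝ) : Fin N → ℝ :=
  if l2 x ≤ B then x else (B / l2 x) • x

noncomputable def sigmaMat {N m : ℕ} (B : ℝ) (M : Matrix (Fin N) (Fin m) ℝ) :
    Matrix (Fin N) (Fin m) ℝ := Matrix.of fun i j => sigma B (fun k => M k j) i

def IsOrthogonal {N : ℕ} (Φ : Matrix (Fin N) (Fin N) ℝ) : Prop := Φᵀ * Φ = 1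

noncomputable def ista {n N m : ℕ} (A : Matrix (Fin n) (Fin N) ℝ) (τ lam : ℝ)
    (Φ : Matrix (Fin N) (Fin N) ℝ) (Y : Matrix (Fin n) (Fin m) ℝ) :
    ℕ → Matrix (Fin N) (Fin m) ℝ
  | 0 => 0
  | l + 1 => softMat (τ * lam)
      ((1 - τ • (Φᵀ * Aᵀ * A * Φ)) * ista A τ lam Φ Y l + τ • ((A * Φ)ᵀ * Y))

noncomputable def istaVec {n N : ℕ} (A : Matrix (Fin n) (Fin N) ℝ) (τ lam : ℝ)
    (Φ : Matrix (Fin N) (Fin N) ℝ) (y : Fin n → ℝ) : ℕ → Fin N → ℝ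
  | 0 => 0
  | l + 1 => soft (τ * lam) ∘
      ((1 - τ • (Φᵀ * Aᵀ * A * Φ)) *ᵥ istaVec A τ lam Φ y l + τ • ((A * Φ)ᵀ *ᵥ y))

noncomputable def KL {n N m : ℕ} (A : Matrix (Fin n) (Fin N) ℝ) (τ : ℝ)
    (Y : Matrix (Fin n) (Fin m) ℝ) (L : ℕ) : ℝ :=
  τ * frobNorm Y * specNorm (1 - τ • (Aᵀ * A)) ^ (L - 1)
    + τ * frobNorm Y * ∑ l ∈ Finset.Icc 2 L,
        specNorm (1 - τ • (Aᵀ * A)) ^ (L - l) *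
          (1 + 2 * τ * specNorm A ^ 2 *
            ∑ k ∈ Finset.range (l - 1), specNorm (1 - τ • (Aᵀ * A)) ^ k)

noncomputable def ML {n N m : ℕ} (A : Matrix (Fin n) (Fin N) ℝ) (τ : ℝ)
    (Y : Matrix (Fin n) (Fin m) ℝ) (L : ℕ) : ℝ :=
  τ * specNorm A * frobNorm Y * ∑ k ∈ Finset.range L, specNorm (1 - τ • (Aᵀ * A)) ^ k

noncomputable def coveringNumber {α : Type*} (d : α → α → ℝ) (s : Set α) (ε : ℝ) : ℝ≥0∞ :=
  ⨅ (t : Finset α) (_ : ∀ x ∈ s, ∃ y ∈ t, d x y ≤ ε), (t.card : ℝ≥0∞)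

/-!
Write `W_Φ = I - τ ΦᵀAᵀAΦ = Φᵀ (I - τAᵀA) Φ` and `b_Φ = τ (AΦ)ᵀY`, so that a layer is
`u ↦ S(W_Φ u + b_Φ)` with `S` entrywise 1-Lipschitz. Comparing the layers for `Φ₁` and `Φ₂`, the
distance `d_l` of the `l`-th outputs satisfies
`d_{l+1} ≤ ‖W_Φ₁‖ d_l + ‖W_Φ₁ - W_Φ₂‖ ‖u_l‖_F + ‖b_Φ₁ - b_Φ₂‖_F`.
Orthogonality gives `‖W_Φ‖ ≤ ρ := ‖I - τAᵀA‖` and `‖AΦ‖ ≤ ‖A‖`; with `B_i = AΦ_i`,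
`W_Φ₁ - W_Φ₂ = τ (B₂ᵀB₂ - B₁ᵀB₁)` has norm at most `2τ‖A‖ ‖B₁ - B₂‖`,
`‖b_Φ₁ - b_Φ₂‖_F ≤ τ ‖B₁ - B₂‖ ‖Y‖_F`, and the outputs stay bounded by
`‖u_l‖_F ≤ M_l = τ‖A‖ ‖Y‖_F Σ_{k<l} ρ^k`. The constant `K_L` solves the resulting recursion
`K_1 = τ‖Y‖_F`, `K_{l+1} = ρ K_l + τ‖Y‖_F + 2τ‖A‖ M_l`.
-/

lemma soft_eq_max_add_min {mu : ℝ} (hmu : 0 ≤ mu) (x : ℝ) :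
    soft mu x = max 0 (x - mu) + min 0 (x + mu) := by
  rcases lt_trichotomy x 0 with hx | rfl | hx
  · rw [soft, Real.sign_of_neg hx, abs_of_neg hx]
    simp only [max_def, min_def]
    split_ifs <;> linarith
  · simp [soft, hmu]
  · rw [soft, Real.sign_of_pos hx, abs_of_pos hx, min_eq_left (by linarith)]
    ring

lemma abs_soft_sub_soft_le {mu : ℝ} (hmu : 0 ≤ mu) (a b : ℝ) :
    |soft mu a - soft mu b| ≤ |a - b| := by
  rw [soft_eq_max_add_min hmu, soft_eq_max_add_min hmu, abs_le]
  constructor <;>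
  · rcases abs_cases (a - b) with ⟨h, _⟩ | ⟨h, _⟩ <;> rw [h] <;>
    · simp only [max_def, min_def]
      split_ifs <;> linarith

lemma soft_zero (mu : ℝ) : soft mu 0 = 0 := by
  simp [soft]

section Frobenius

attribute [local instance] Matrix.frobeniusSeminormedAddCommGroup Matrix.frobeniusNormedSpace

variable {a b : ℕ}

lemma frobNorm_eq_norm (A : Matrix (Fin a) (Fin b) ℝ) : frobNorm A = ‖A‖ := by
  simp only [frobNorm, Matrix.frobenius_norm_def, ← Real.sqrt_eq_rpow, Real.norm_eq_abs,
    Real.rpow_two, sq_abs]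

lemma frobNorm_nonneg (A : Matrix (Fin a) (Fin b) ℝ) : 0 ≤ frobNorm A :=
  Real.sqrt_nonneg _

lemma frobNorm_zero : frobNorm (0 : Matrix (Fin a) (Fin b) ℝ) = 0 := by
  simp [frobNorm_eq_norm]

lemma frobNorm_add_le (A B : Matrix (Fin a) (Fin b) ℝ) :
    frobNorm (A + B) ≤ frobNorm A + frobNorm B := by
  simpa only [frobNorm_eq_norm] using norm_add_le A B

lemma frobNorm_smul (c : ℝ) (A : Matrix (Fin a) (Fin b) ℝ) :
    frobNorm (c • A) = |c| * frobNorm A := by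
  simp only [frobNorm_eq_norm, norm_smul, Real.norm_eq_abs]

end Frobenius

section L2Operator

open scoped Matrix.Norms.L2Operator

variable {a b c : ℕ}

lemma specNorm_eq_norm (A : Matrix (Fin a) (Fin b) ℝ) : specNorm A = ‖A‖ := rfl

lemma specNorm_nonneg (A : Matrix (Fin a) (Fin b) ℝ) : 0 ≤ specNorm A :=
  norm_nonneg _

lemma specNorm_mul_le (A : Matrix (Fin a) (Fin b) ℝ) (B : Matrix (Fin b) (Fin c) ℝ) :
    specNorm (A * B) ≤ specNorm A * specNorm B :=
  Matrix.l2_opNorm_mul A B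

lemma specNorm_transpose (A : Matrix (Fin a) (Fin b) ℝ) : specNorm Aᵀ = specNorm A :=
  Matrix.l2_opNorm_conjTranspose A

lemma specNorm_add_le (A B : Matrix (Fin a) (Fin b) ℝ) :
    specNorm (A + B) ≤ specNorm A + specNorm B :=
  norm_add_le A B

lemma specNorm_sub_comm (A B : Matrix (Fin a) (Fin b) ℝ) :
    specNorm (A - B) = specNorm (B - A) :=
  norm_sub_rev A B

lemma specNorm_smul (r : ℝ) (A : Matrix (Fin a) (Fin b) ℝ) :
    specNorm (r • A) = |r| * specNorm A :=
  norm_smul r A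

lemma specNorm_le_one_of_isOrthogonal {Φ : Matrix (Fin a) (Fin a) ℝ} (hΦ : IsOrthogonal Φ) :
    specNorm Φ ≤ 1 := by
  -- C*-identity: `‖Φ‖² = ‖Φᵀ Φ‖ = ‖1‖` and `‖1‖² = ‖1‖` (`‖1‖ = 0` when `a = 0`)
  have hΦ' := Matrix.l2_opNorm_conjTranspose_mul_self Φ
  have h1 := Matrix.l2_opNorm_conjTranspose_mul_self (1 : Matrix (Fin a) (Fin a) ℝ)
  rw [Matrix.conjTranspose_eq_transpose_of_trivial, hΦ] at hΦ'
  rw [Matrix.conjTranspose_one, Matrix.one_mul] at h1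
  have h1_le : ‖(1 : Matrix (Fin a) (Fin a) ℝ)‖ ≤ 1 := by
    nlinarith [norm_nonneg (1 : Matrix (Fin a) (Fin a) ℝ)]
  rw [specNorm_eq_norm]
  nlinarith [norm_nonneg Φ]

lemma frobNorm_sq_eq_sum_norm_col_sq (X : Matrix (Fin a) (Fin b) ℝ) :
    frobNorm X ^ 2 = ∑ j, ‖WithLp.toLp 2 (Xᵀ j)‖ ^ 2 := by
  simp only [frobNorm, EuclideanSpace.norm_sq_eq, Real.norm_eq_abs, sq_abs]
  rw [Real.sq_sqrt (by positivity), Finset.sum_comm]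
  rfl

lemma frobNorm_mul_le (M : Matrix (Fin a) (Fin b) ℝ) (X : Matrix (Fin b) (Fin c) ℝ) :
    frobNorm (M * X) ≤ specNorm M * frobNorm X := by
  refine (pow_le_pow_iff_left₀ (frobNorm_nonneg _)
    (mul_nonneg (specNorm_nonneg M) (frobNorm_nonneg X)) two_ne_zero).mp ?_
  rw [mul_pow, frobNorm_sq_eq_sum_norm_col_sq, frobNorm_sq_eq_sum_norm_col_sq, Finset.mul_sum]
  refine Finset.sum_le_sum fun j _ => ?_
  have hcol : (M * X)ᵀ j = M *ᵥ Xᵀ j := by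
    ext i
    rfl
  rw [← mul_pow, hcol]
  exact pow_le_pow_left₀ (norm_nonneg _) (Matrix.l2_opNorm_mulVec M (WithLp.toLp 2 (Xᵀ j))) 2

lemma frobNorm_smul_transpose_mul_le {r : ℝ} (hr : 0 ≤ r) (B : Matrix (Fin a) (Fin b) ℝ)
    (Z : Matrix (Fin a) (Fin c) ℝ) : frobNorm (r • (Bᵀ * Z)) ≤ r * specNorm B * frobNorm Z := by
  grw [frobNorm_smul, abs_of_nonneg hr, frobNorm_mul_le, specNorm_transpose, mul_assoc]

lemma specNorm_mul_le_of_isOrthogonal (A : Matrix (Fin a) (Fin b) ℝ)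
    {Φ : Matrix (Fin b) (Fin b) ℝ} (hΦ : IsOrthogonal Φ) : specNorm (A * Φ) ≤ specNorm A :=
  calc specNorm (A * Φ) ≤ specNorm A * specNorm Φ := specNorm_mul_le A Φ
    _ ≤ specNorm A := by
        grw [specNorm_le_one_of_isOrthogonal hΦ, mul_one]
        exact specNorm_nonneg A

lemma specNorm_transpose_mul_mul_le_of_isOrthogonal (M : Matrix (Fin b) (Fin b) ℝ)
    {Φ : Matrix (Fin b) (Fin b) ℝ} (hΦ : IsOrthogonal Φ) : specNorm (Φᵀ * M * Φ) ≤ specNorm M :=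
  have := specNorm_nonneg Φ
  have := specNorm_nonneg M
  calc specNorm (Φᵀ * M * Φ) ≤ specNorm Φ * specNorm M * specNorm Φ := by
        grw [specNorm_mul_le, specNorm_mul_le, specNorm_transpose]
    _ ≤ specNorm M := by
        grw [specNorm_le_one_of_isOrthogonal hΦ, one_mul, specNorm_le_one_of_isOrthogonal hΦ,
          mul_one]

lemma specNorm_transpose_mul_self_sub_le (B B' : Matrix (Fin a) (Fin b) ℝ) :
    specNorm (Bᵀ * B - B'ᵀ * B') ≤ (specNorm B + specNorm B') * specNorm (B - B') := by
  have hsplit : Bᵀ * B - B'ᵀ * B' = Bᵀ * (B - B') + (B - B')ᵀ * B' := by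
    rw [Matrix.transpose_sub, Matrix.mul_sub, Matrix.sub_mul]
    abel
  calc specNorm (Bᵀ * B - B'ᵀ * B')
      ≤ specNorm Bᵀ * specNorm (B - B') + specNorm (B - B')ᵀ * specNorm B' := by
        grw [hsplit, specNorm_add_le, specNorm_mul_le, specNorm_mul_le]
    _ = (specNorm B + specNorm B') * specNorm (B - B') := by
        rw [specNorm_transpose, specNorm_transpose]
        ring

end L2Operator

section SoftThreshold

variable {a b c : ℕ} {mu : ℝ}

lemma frobNorm_le_frobNorm_of_abs_le {A B : Matrix (Fin a) (Fin b) ℝ}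
    (h : ∀ i j, |A i j| ≤ |B i j|) : frobNorm A ≤ frobNorm B :=
  Real.sqrt_le_sqrt <| Finset.sum_le_sum fun i _ =>
    Finset.sum_le_sum fun j _ => sq_le_sq.mpr (h i j)

lemma frobNorm_softMat_sub_le (hmu : 0 ≤ mu) (X X' : Matrix (Fin a) (Fin b) ℝ) :
    frobNorm (softMat mu X - softMat mu X') ≤ frobNorm (X - X') :=
  frobNorm_le_frobNorm_of_abs_le fun _ _ => abs_soft_sub_soft_le hmu _ _

lemma softMat_zero : softMat mu (0 : Matrix (Fin a) (Fin b) ℝ) = 0 := by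
  ext
  simp [softMat, soft_zero]

lemma frobNorm_softMat_le (hmu : 0 ≤ mu) (X : Matrix (Fin a) (Fin b) ℝ) :
    frobNorm (softMat mu X) ≤ frobNorm X := by
  simpa [softMat_zero] using frobNorm_softMat_sub_le hmu X 0

lemma frobNorm_softMat_affine_le (hmu : 0 ≤ mu) (W : Matrix (Fin a) (Fin c) ℝ)
    (u : Matrix (Fin c) (Fin b) ℝ) (v : Matrix (Fin a) (Fin b) ℝ) :
    frobNorm (softMat mu (W * u + v)) ≤ specNorm W * frobNorm u + frobNorm v :=
  calc frobNorm (softMat mu (W * u + v)) ≤ frobNorm (W * u) + frobNorm v :=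
        (frobNorm_softMat_le hmu _).trans (frobNorm_add_le _ _)
    _ ≤ specNorm W * frobNorm u + frobNorm v := by grw [frobNorm_mul_le]

lemma frobNorm_softMat_affine_sub_le (hmu : 0 ≤ mu) (W W' : Matrix (Fin a) (Fin c) ℝ)
    (u u' : Matrix (Fin c) (Fin b) ℝ) (v v' : Matrix (Fin a) (Fin b) ℝ) :
    frobNorm (softMat mu (W * u + v) - softMat mu (W' * u' + v')) ≤
      specNorm W * frobNorm (u - u') + specNorm (W - W') * frobNorm u' + frobNorm (v - v') := by
  have hsplit : (W * u + v) - (W' * u' + v') = W * (u - u') + (W - W') * u' + (v - v') := by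
    rw [Matrix.mul_sub, Matrix.sub_mul]
    abel
  calc _ ≤ frobNorm (W * (u - u') + (W - W') * u' + (v - v')) :=
        hsplit ▸ frobNorm_softMat_sub_le hmu _ _
    _ ≤ frobNorm (W * (u - u')) + frobNorm ((W - W') * u') + frobNorm (v - v') := by
        grw [frobNorm_add_le, frobNorm_add_le]
    _ ≤ _ := by grw [frobNorm_mul_le, frobNorm_mul_le]

end SoftThreshold

section Ista

variable {n N m : ℕ} (A : Matrix (Fin n) (Fin N) ℝ) {τ lam : ℝ} (Y : Matrix (Fin n) (Fin m) ℝ)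

lemma ista_weight_eq_conj {Φ : Matrix (Fin N) (Fin N) ℝ} (hΦ : IsOrthogonal Φ) :
    1 - τ • (Φᵀ * Aᵀ * A * Φ) = Φᵀ * (1 - τ • (Aᵀ * A)) * Φ := by
  rw [Matrix.mul_sub, Matrix.sub_mul, Matrix.mul_one, hΦ, Matrix.mul_smul, Matrix.smul_mul]
  simp only [Matrix.mul_assoc]

lemma specNorm_ista_weight_le {Φ : Matrix (Fin N) (Fin N) ℝ} (hΦ : IsOrthogonal Φ) :
    specNorm (1 - τ • (Φᵀ * Aᵀ * A * Φ)) ≤ specNorm (1 - τ • (Aᵀ * A)) := by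
  rw [ista_weight_eq_conj A hΦ]
  exact specNorm_transpose_mul_mul_le_of_isOrthogonal _ hΦ

lemma specNorm_ista_weight_sub_le (hτ : 0 ≤ τ) {Φ₁ Φ₂ : Matrix (Fin N) (Fin N) ℝ}
    (hΦ₁ : IsOrthogonal Φ₁) (hΦ₂ : IsOrthogonal Φ₂) :
    specNorm ((1 - τ • (Φ₁ᵀ * Aᵀ * A * Φ₁)) - (1 - τ • (Φ₂ᵀ * Aᵀ * A * Φ₂))) ≤
      2 * τ * specNorm A * specNorm (A * Φ₁ - A * Φ₂) := by
  have hgram : ∀ Φ : Matrix (Fin N) (Fin N) ℝ, Φᵀ * Aᵀ * A * Φ = (A * Φ)ᵀ * (A * Φ) := by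
    intro Φ
    simp only [Matrix.transpose_mul, Matrix.mul_assoc]
  calc specNorm ((1 - τ • (Φ₁ᵀ * Aᵀ * A * Φ₁)) - (1 - τ • (Φ₂ᵀ * Aᵀ * A * Φ₂)))
      = τ * specNorm ((A * Φ₂)ᵀ * (A * Φ₂) - (A * Φ₁)ᵀ * (A * Φ₁)) := by
        rw [hgram, hgram, sub_sub_sub_cancel_left, ← smul_sub, specNorm_smul, abs_of_nonneg hτ]
    _ ≤ τ * ((specNorm (A * Φ₂) + specNorm (A * Φ₁)) * specNorm (A * Φ₁ - A * Φ₂)) := by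
        grw [specNorm_transpose_mul_self_sub_le, specNorm_sub_comm]
    _ ≤ τ * ((specNorm A + specNorm A) * specNorm (A * Φ₁ - A * Φ₂)) := by
        have := specNorm_nonneg (A * Φ₁ - A * Φ₂)
        grw [specNorm_mul_le_of_isOrthogonal A hΦ₁, specNorm_mul_le_of_isOrthogonal A hΦ₂]
    _ = 2 * τ * specNorm A * specNorm (A * Φ₁ - A * Φ₂) := by ring

lemma frobNorm_ista_le_ML (hτ : 0 ≤ τ) (hlam : 0 ≤ lam) {Φ : Matrix (Fin N) (Fin N) ℝ}
    (hΦ : IsOrthogonal Φ) (l : ℕ) : frobNorm (ista A τ lam Φ Y l) ≤ ML A τ Y l := by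
  induction l with
  | zero => simp [ista, ML, frobNorm_zero]
  | succ l ih =>
    calc frobNorm (ista A τ lam Φ Y (l + 1))
        ≤ specNorm (1 - τ • (Φᵀ * Aᵀ * A * Φ)) * frobNorm (ista A τ lam Φ Y l)
          + frobNorm (τ • ((A * Φ)ᵀ * Y)) :=
          frobNorm_softMat_affine_le (mul_nonneg hτ hlam) _ _ _
      _ ≤ specNorm (1 - τ • (Aᵀ * A)) * ML A τ Y l + τ * specNorm A * frobNorm Y := by
          have := frobNorm_nonneg Y
          have := frobNorm_nonneg (ista A τ lam Φ Y l)
          have := specNorm_nonneg (1 - τ • (Aᵀ * A))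
          grw [specNorm_ista_weight_le A hΦ, ih, frobNorm_smul_transpose_mul_le hτ,
            specNorm_mul_le_of_isOrthogonal A hΦ]
      _ = ML A τ Y (l + 1) := by
          rw [ML, ML, geom_sum_succ]
          ring

lemma KL_one : KL A τ Y 1 = τ * frobNorm Y := by
  simp [KL]

lemma KL_succ {l : ℕ} (hl : 1 ≤ l) :
    KL A τ Y (l + 1) = specNorm (1 - τ • (Aᵀ * A)) * KL A τ Y l + τ * frobNorm Y
      + 2 * τ * specNorm A * ML A τ Y l := by
  set ρ := specNorm (1 - τ • (Aᵀ * A))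
  have hshift : ∑ j ∈ Finset.Icc 2 l, ρ ^ (l + 1 - j) *
        (1 + 2 * τ * specNorm A ^ 2 * ∑ k ∈ Finset.range (j - 1), ρ ^ k)
      = ρ * ∑ j ∈ Finset.Icc 2 l, ρ ^ (l - j) *
        (1 + 2 * τ * specNorm A ^ 2 * ∑ k ∈ Finset.range (j - 1), ρ ^ k) := by
    rw [Finset.mul_sum]
    refine Finset.sum_congr rfl fun j hj => ?_
    rw [show l + 1 - j = l - j + 1 by have := (Finset.mem_Icc.mp hj).2; omega, pow_succ']
    ring
  obtain ⟨k, rfl⟩ : ∃ k, l = k + 1 := ⟨l - 1, by omega⟩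
  rw [KL, KL, ML, Finset.sum_Icc_succ_top (by omega), hshift]
  simp only [Nat.add_sub_cancel, Nat.sub_self, pow_zero, pow_succ]
  ring

lemma frobNorm_ista_succ_sub_le (hτ : 0 ≤ τ) (hlam : 0 ≤ lam) {Φ₁ Φ₂ : Matrix (Fin N) (Fin N) ℝ}
    (hΦ₁ : IsOrthogonal Φ₁) (hΦ₂ : IsOrthogonal Φ₂) (l : ℕ) :
    frobNorm (ista A τ lam Φ₁ Y (l + 1) - ista A τ lam Φ₂ Y (l + 1)) ≤
      specNorm (1 - τ • (Aᵀ * A)) * frobNorm (ista A τ lam Φ₁ Y l - ista A τ lam Φ₂ Y l)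
        + 2 * τ * specNorm A * specNorm (A * Φ₁ - A * Φ₂) * ML A τ Y l
        + τ * specNorm (A * Φ₁ - A * Φ₂) * frobNorm Y := by
  have hbias : τ • ((A * Φ₁)ᵀ * Y) - τ • ((A * Φ₂)ᵀ * Y) = τ • ((A * Φ₁ - A * Φ₂)ᵀ * Y) := by
    rw [Matrix.transpose_sub, Matrix.sub_mul, smul_sub]
  have := frobNorm_nonneg (ista A τ lam Φ₁ Y l - ista A τ lam Φ₂ Y l)
  have := frobNorm_nonneg (ista A τ lam Φ₂ Y l)
  have := specNorm_nonneg (1 - τ • (Aᵀ * A))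
  have := mul_nonneg (mul_nonneg (mul_nonneg zero_le_two hτ) (specNorm_nonneg A))
    (specNorm_nonneg (A * Φ₁ - A * Φ₂))
  calc _ ≤ specNorm (1 - τ • (Φ₁ᵀ * Aᵀ * A * Φ₁))
          * frobNorm (ista A τ lam Φ₁ Y l - ista A τ lam Φ₂ Y l)
        + specNorm ((1 - τ • (Φ₁ᵀ * Aᵀ * A * Φ₁)) - (1 - τ • (Φ₂ᵀ * Aᵀ * A * Φ₂)))
          * frobNorm (ista A τ lam Φ₂ Y l)
        + frobNorm (τ • ((A * Φ₁)ᵀ * Y) - τ • ((A * Φ₂)ᵀ * Y)) :=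
        frobNorm_softMat_affine_sub_le (mul_nonneg hτ hlam) _ _ _ _ _ _
    _ ≤ _ := by
        grw [hbias, specNorm_ista_weight_le A hΦ₁, specNorm_ista_weight_sub_le A hτ hΦ₁ hΦ₂,
          frobNorm_ista_le_ML A Y hτ hlam hΦ₂, frobNorm_smul_transpose_mul_le hτ]

lemma frobNorm_ista_sub_ista_le (hτ : 0 ≤ τ) (hlam : 0 ≤ lam) {Φ₁ Φ₂ : Matrix (Fin N) (Fin N) ℝ}
    (hΦ₁ : IsOrthogonal Φ₁) (hΦ₂ : IsOrthogonal Φ₂) {L : ℕ} (hL : 1 ≤ L) :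
    frobNorm (ista A τ lam Φ₁ Y L - ista A τ lam Φ₂ Y L) ≤
      KL A τ Y L * specNorm (A * Φ₁ - A * Φ₂) := by
  induction L, hL using Nat.le_induction with
  | base =>
    grw [frobNorm_ista_succ_sub_le A Y hτ hlam hΦ₁ hΦ₂ 0]
    simp only [ista, sub_self, frobNorm_zero, mul_zero, ML, Finset.range_zero, Finset.sum_empty,
      add_zero, zero_add, KL_one]
    linarith
  | succ l hl ih =>
    have := specNorm_nonneg (1 - τ • (Aᵀ * A))
    grw [frobNorm_ista_succ_sub_le A Y hτ hlam hΦ₁ hΦ₂, ih, KL_succ A Y hl]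
    linarith

end Ista

theorem statement6 {n N m : ℕ} (A : Matrix (Fin n) (Fin N) ℝ)
    (τ lam : ℝ) (hτ : 0 < τ) (hlam : 0 < lam)
    (Y : Matrix (Fin n) (Fin m) ℝ) (L : ℕ) (hL : 2 ≤ L)
    (Φ₁ Φ₂ : Matrix (Fin N) (Fin N) ℝ) (hΦ₁ : IsOrthogonal Φ₁) (hΦ₂ : IsOrthogonal Φ₂) :
    frobNorm (ista A τ lam Φ₁ Y L - ista A τ lam Φ₂ Y L) ≤
      KL A τ Y L * specNorm (A * Φ₁ - A * Φ₂) :=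
  frobNorm_ista_sub_ista_le A Y hτ.le hlam.le hΦ₁ hΦ₂ (by omega)
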